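/- Let Λ be a row-finite 2-graph with no sources. If every vertex of Λ has a (1,1)-aperiodic quartet, then Λ is strongly aperiodic. -/

import Mathlib

set_option autoImplicit false

open scoped Classical

/-- A `k`-graph: a countable small category together with a degree functor
`d : Λ → ℕ^k` satisfying the unique factorization property.  Paths (morphisms)
form a single type; vertices (objects) are identified with the paths of
degree `0`. -/
structure KGraph (k : ℕ) where
  /-- the type of paths (morphisms) of the `k`-graph -/
  Path : Type
  countable : Countable Path
  nonempty : Nonempty Path
  /-- the range (codomain) vertex of a path -/
  r : Path → Path
  /-- the source (domain) vertex of a path -/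
  s : Path → Path
  /-- composition: `comp lam mu` is the path `λμ`, meaningful when `s lam = r mu` -/
  comp : Path → Path → Path
  /-- the degree functor -/
  d : Path → Fin k → ℕ
  d_r : ∀ lam, d (r lam) = 0
  d_s : ∀ lam, d (s lam) = 0
  r_r : ∀ lam, r (r lam) = r lam
  s_r : ∀ lam, s (r lam) = r lam
  r_s : ∀ lam, r (s lam) = s lam
  s_s : ∀ lam, s (s lam) = s lam
  id_comp : ∀ lam, comp (r lam) lam = lam
  comp_id : ∀ lam, comp lam (s lam) = lam
  r_comp : ∀ lam mu, s lam = r mu → r (comp lam mu) = r lam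
  s_comp : ∀ lam mu, s lam = r mu → s (comp lam mu) = s mu
  d_comp : ∀ lam mu, s lam = r mu → d (comp lam mu) = d lam + d mu
  comp_assoc : ∀ lam mu nu, s lam = r mu → s mu = r nu →
    comp (comp lam mu) nu = comp lam (comp mu nu)
  /-- the unique factorization property -/
  factor : ∀ lam (m n : Fin k → ℕ), d lam = m + n →
    ∃! p : Path × Path, s p.1 = r p.2 ∧ comp p.1 p.2 = lam ∧ d p.1 = m ∧ d p.2 = n

namespace KGraph

variable {k : ℕ}

/-- `v` is a vertex, i.e. an element of `Λ⁰`. -/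
def IsVertex (Λ : KGraph k) (v : Λ.Path) : Prop := Λ.d v = 0

/-- `v ≤ w`, i.e. `vΛw ≠ ∅`. -/
def Conn (Λ : KGraph k) (v w : Λ.Path) : Prop := ∃ lam, Λ.r lam = v ∧ Λ.s lam = w

/-- the canonical generator `e i` of `ℕ^k`. -/
def eVec (k : ℕ) (i : Fin k) : Fin k → ℕ := Pi.single i 1

/-- `Λ` is row-finite: `vΛⁿ` is finite for every vertex `v` and `n ∈ ℕ^k`. -/
def RowFinite (Λ : KGraph k) : Prop :=
  ∀ v, Λ.IsVertex v → ∀ n : Fin k → ℕ, {lam | Λ.r lam = v ∧ Λ.d lam = n}.Finite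

/-- `Λ` has no sources: `vΛ^{e i} ≠ ∅` for every vertex `v` and `i`. -/
def NoSources (Λ : KGraph k) : Prop :=
  ∀ v, Λ.IsVertex v → ∀ i : Fin k, ∃ lam, Λ.r lam = v ∧ Λ.d lam = eVec k i

/-- the middle factor `λ(m,n)`: the unique `σ` such that `λ = μστ` with
`d μ = m`, `d σ = n - m`, `d τ = d λ - n` (junk value if no factorization exists). -/
noncomputable def seg (Λ : KGraph k) (lam : Λ.Path) (m n : Fin k → ℕ) : Λ.Path :=
  if h : ∃ sig, ∃ mu tau, Λ.s mu = Λ.r sig ∧ Λ.s sig = Λ.r tau ∧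
      Λ.comp (Λ.comp mu sig) tau = lam ∧ Λ.d mu = m ∧ Λ.d sig = n - m ∧
      Λ.d tau = Λ.d lam - n
  then h.choose else lam

/-- `Λ` has no local periodicity at the vertex `v`. -/
def NoLocalPeriodicity (Λ : KGraph k) (v : Λ.Path) : Prop :=
  ∀ m n : Fin k → ℕ, m ≠ n →
    ∃ lam, Λ.r lam = v ∧ m ⊔ n ≤ Λ.d lam ∧
      Λ.seg lam m (m + Λ.d lam - (m ⊔ n)) ≠ Λ.seg lam n (n + Λ.d lam - (m ⊔ n))

/-- `Λ` is aperiodic: no vertex has local periodicity. -/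
def Aperiodic (Λ : KGraph k) : Prop := ∀ v, Λ.IsVertex v → Λ.NoLocalPeriodicity v

/-- a hereditary set of vertices -/
def Hereditary (Λ : KGraph k) (H : Set Λ.Path) : Prop :=
  ∀ v ∈ H, ∀ w, Λ.Conn v w → w ∈ H

/-- a saturated set of vertices -/
def Saturated (Λ : KGraph k) (H : Set Λ.Path) : Prop :=
  ∀ v, Λ.IsVertex v → (∃ mu, Λ.r mu = v) →
    (∃ i : Fin k, ∀ lam, Λ.r lam = v → Λ.d lam = eVec k i → Λ.s lam ∈ H) → v ∈ H

/-- the saturation of a set of vertices: the smallest saturated set containing it -/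
def saturation (Λ : KGraph k) (H : Set Λ.Path) : Set Λ.Path :=
  ⋂₀ {K : Set Λ.Path | H ⊆ K ∧ Λ.Saturated K}

/-- no local periodicity at the vertex `v` of the quotient graph `Γ(Λ \ H)`
(whose paths are the paths of `Λ` with source outside `H`). -/
def QuotNoLocalPeriodicity (Λ : KGraph k) (H : Set Λ.Path) (v : Λ.Path) : Prop :=
  ∀ m n : Fin k → ℕ, m ≠ n →
    ∃ lam, Λ.r lam = v ∧ Λ.s lam ∉ H ∧ m ⊔ n ≤ Λ.d lam ∧
      Λ.seg lam m (m + Λ.d lam - (m ⊔ n)) ≠ Λ.seg lam n (n + Λ.d lam - (m ⊔ n))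

/-- `Λ` is strongly aperiodic: `Γ(Λ \ H)` is aperiodic for every saturated
hereditary proper subset `H ⊊ Λ⁰`. -/
def StronglyAperiodic (Λ : KGraph k) : Prop :=
  ∀ H : Set Λ.Path, (∀ v ∈ H, Λ.IsVertex v) → Λ.Hereditary H → Λ.Saturated H →
    H ≠ {v | Λ.IsVertex v} →
    ∀ v, Λ.IsVertex v → v ∉ H → Λ.QuotNoLocalPeriodicity H v

/-- a maximal tail -/
def MaximalTail (Λ : KGraph k) (γ : Set Λ.Path) : Prop :=
  γ.Nonempty ∧ (∀ v ∈ γ, Λ.IsVertex v) ∧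
  (∀ v₁ ∈ γ, ∀ v₂ ∈ γ, ∃ w ∈ γ, Λ.Conn v₁ w ∧ Λ.Conn v₂ w) ∧
  (∀ v ∈ γ, ∀ i : Fin k, ∃ f, Λ.r f = v ∧ Λ.d f = eVec k i ∧ Λ.s f ∈ γ) ∧
  (∀ v, Λ.IsVertex v → ∀ w ∈ γ, Λ.Conn v w → v ∈ γ)

end KGraph

namespace KGraph

/-- an `(a,b)`-aperiodic quartet at the vertex `u` of a `2`-graph -/
def AperiodicQuartet (L : KGraph 2) (u : L.Path) (a b : ℕ)
    (al1 al2 be1 be2 : L.Path) : Prop :=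
  0 < a ∧ 0 < b ∧
  al1 ≠ al2 ∧ be1 ≠ be2 ∧
  L.r al1 = u ∧ L.s al1 = u ∧ L.d al1 = Pi.single (0 : Fin 2) a ∧
  L.r al2 = u ∧ L.s al2 = u ∧ L.d al2 = Pi.single (0 : Fin 2) a ∧
  L.r be1 = u ∧ L.s be1 = u ∧ L.d be1 = Pi.single (1 : Fin 2) b ∧
  L.r be2 = u ∧ L.s be2 = u ∧ L.d be2 = Pi.single (1 : Fin 2) b ∧
  L.comp be2 al1 = L.comp al1 be2 ∧
  L.comp be2 al2 = L.comp al2 be2 ∧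
  L.comp be1 al1 = L.comp al2 be1 ∧
  L.comp be1 al2 = L.comp al1 be1

end KGraph

/-! For `m ≠ n` it suffices to find a loop `λ` at `v` with two factorizations
`λ = μστ = μ'σ'τ'`, where `d μ = m`, `d μ' = n`, `σ ≠ σ'` are edges of the same degree and
`d λ = (m ∨ n) + d σ`: then `λ(m, …) = σ ≠ σ' = λ(n, …)`, and `λ` survives in every `Γ(Λ \ H)`
with `v ∉ H` because `s(λ) = v`. Up to swapping `m` and `n`, either `m₀ < n₀`, and since `β₂`
commutes with `α₁` and `α₂`,
`(α₁^{m₀} β₂^{m₁}) α₁ (α₁^{n₀-m₀-1} α₂ β₂^{c-m₁}) = (α₁^{n₀} β₂^{n₁}) α₂ β₂^{c-n₁}` with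
`c = m₁ ∨ n₁`; or `m₀ = n₀` and `m₁ < n₁`, and associativity alone gives
`(α₁^{m₀} β₂^{m₁}) β₂ (β₂^{n₁-m₁-1} β₁) = (α₁^{m₀} β₂^{n₁}) β₁`. -/

theorem Commute.pow_mul_mul_pow {M : Type*} [Monoid M] {b y : M} (h : Commute b y) (i j : ℕ) :
    b ^ i * y * b ^ j = y * b ^ (i + j) := by
  rw [(h.pow_left i).eq, mul_assoc, pow_add]

namespace KGraph

variable {k : ℕ} {Λ : KGraph k}

theorem eq_and_eq_of_comp_eq {a b a' b' : Λ.Path} (hab : Λ.s a = Λ.r b)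
    (hab' : Λ.s a' = Λ.r b') (h : Λ.comp a b = Λ.comp a' b') (ha : Λ.d a = Λ.d a')
    (hb : Λ.d b = Λ.d b') : a = a' ∧ b = b' := by
  obtain ⟨p, _, hp⟩ := Λ.factor (Λ.comp a b) (Λ.d a) (Λ.d b) (Λ.d_comp a b hab)
  have e : (a, b) = (a', b') :=
    (hp (a, b) ⟨hab, rfl, rfl, rfl⟩).trans (hp (a', b') ⟨hab', h.symm, ha.symm, hb.symm⟩).symm
  exact Prod.ext_iff.mp e

theorem IsVertex.r_eq_and_s_eq {v : Λ.Path} (hv : Λ.IsVertex v) : Λ.r v = v ∧ Λ.s v = v := by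
  obtain ⟨hr, hs⟩ := eq_and_eq_of_comp_eq (Λ.s_r v) (Λ.r_s v).symm
    ((Λ.id_comp v).trans (Λ.comp_id v).symm) ((Λ.d_r v).trans hv.symm) (hv.trans (Λ.d_s v).symm)
  exact ⟨hr, hs.symm⟩

theorem seg_comp_comp {mu sig tau : Λ.Path} (h₁ : Λ.s mu = Λ.r sig) (h₂ : Λ.s sig = Λ.r tau) :
    Λ.seg (Λ.comp (Λ.comp mu sig) tau) (Λ.d mu) (Λ.d mu + Λ.d sig) = sig := by
  have hd₁ : Λ.d (Λ.comp mu sig) = Λ.d mu + Λ.d sig := Λ.d_comp mu sig h₁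
  have h₁₂ : Λ.s (Λ.comp mu sig) = Λ.r tau := (Λ.s_comp mu sig h₁).trans h₂
  have hex : ∃ sig', ∃ mu' tau', Λ.s mu' = Λ.r sig' ∧ Λ.s sig' = Λ.r tau' ∧
      Λ.comp (Λ.comp mu' sig') tau' = Λ.comp (Λ.comp mu sig) tau ∧ Λ.d mu' = Λ.d mu ∧
      Λ.d sig' = Λ.d mu + Λ.d sig - Λ.d mu ∧
      Λ.d tau' = Λ.d (Λ.comp (Λ.comp mu sig) tau) - (Λ.d mu + Λ.d sig) :=
    ⟨sig, mu, tau, h₁, h₂, rfl, rfl, (add_tsub_cancel_left _ _).symm,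
      by rw [Λ.d_comp _ _ h₁₂, hd₁, add_tsub_cancel_left]⟩
  rw [seg, dif_pos hex]
  obtain ⟨mu', tau', g₁, g₂, g₃, g₄, g₅, g₆⟩ := hex.choose_spec
  have g₅' := g₅.trans (add_tsub_cancel_left _ _)
  have hcomp := (eq_and_eq_of_comp_eq ((Λ.s_comp _ _ g₁).trans g₂) h₁₂ g₃
    (by rw [Λ.d_comp _ _ g₁, g₄, g₅', hd₁])
    (by rw [g₆, Λ.d_comp _ _ h₁₂, hd₁, add_tsub_cancel_left])).1
  exact (eq_and_eq_of_comp_eq g₁ h₁ hcomp g₄ g₅').2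

def Distinguishes (Λ : KGraph k) (lam : Λ.Path) (m n : Fin k → ℕ) : Prop :=
  m ⊔ n ≤ Λ.d lam ∧ Λ.seg lam m (m + Λ.d lam - (m ⊔ n)) ≠ Λ.seg lam n (n + Λ.d lam - (m ⊔ n))

theorem Distinguishes.symm {lam : Λ.Path} {m n : Fin k → ℕ} (h : Λ.Distinguishes lam m n) :
    Λ.Distinguishes lam n m := by
  rw [Distinguishes, sup_comm]
  exact ⟨h.1, h.2.symm⟩

def Vertex (Λ : KGraph k) : Type := {v : Λ.Path // Λ.IsVertex v}

def Loop (Λ : KGraph k) (u : Λ.Vertex) : Type := {x : Λ.Path // Λ.r x = u.1 ∧ Λ.s x = u.1}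

noncomputable instance (u : Λ.Vertex) : Monoid (Λ.Loop u) where
  mul x y := ⟨Λ.comp x.1 y.1, (Λ.r_comp _ _ (x.2.2.trans y.2.1.symm)).trans x.2.1,
    (Λ.s_comp _ _ (x.2.2.trans y.2.1.symm)).trans y.2.2⟩
  one := ⟨u.1, u.2.r_eq_and_s_eq⟩
  mul_assoc x y z :=
    Subtype.ext (Λ.comp_assoc _ _ _ (x.2.2.trans y.2.1.symm) (y.2.2.trans z.2.1.symm))
  one_mul x := Subtype.ext ((congrArg (Λ.comp · x.1) x.2.1.symm).trans (Λ.id_comp x.1))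
  mul_one x := Subtype.ext ((congrArg (Λ.comp x.1) x.2.2.symm).trans (Λ.comp_id x.1))

namespace Loop

variable {u : Λ.Vertex}

theorem d_mul (x y : Λ.Loop u) : Λ.d (x * y).1 = Λ.d x.1 + Λ.d y.1 :=
  Λ.d_comp _ _ (x.2.2.trans y.2.1.symm)

theorem d_one : Λ.d (1 : Λ.Loop u).1 = 0 := u.2

theorem d_pow (x : Λ.Loop u) (n : ℕ) : Λ.d (x ^ n).1 = n • Λ.d x.1 := by
  induction n with
  | zero => rw [pow_zero, d_one, zero_smul]
  | succ n ih => rw [pow_succ, d_mul, ih, succ_nsmul]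

theorem seg_mul_mul (mu sig tau : Λ.Loop u) :
    Λ.seg (mu * sig * tau).1 (Λ.d mu.1) (Λ.d mu.1 + Λ.d sig.1) = sig.1 :=
  seg_comp_comp (mu.2.2.trans sig.2.1.symm) (sig.2.2.trans tau.2.1.symm)

theorem distinguishes_of_mul_mul_eq {mu sig tau mu' sig' tau' : Λ.Loop u}
    (h : mu * sig * tau = mu' * sig' * tau') (hsig : Λ.d sig.1 = Λ.d sig'.1) (hne : sig ≠ sig')
    (hd : Λ.d (mu * sig * tau).1 = Λ.d mu.1 ⊔ Λ.d mu'.1 + Λ.d sig.1) :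
    Λ.Distinguishes (mu * sig * tau).1 (Λ.d mu.1) (Λ.d mu'.1) := by
  have top (m : Fin k → ℕ) : m + Λ.d (mu * sig * tau).1 - (Λ.d mu.1 ⊔ Λ.d mu'.1) =
      m + Λ.d sig.1 := by
    rw [hd, add_left_comm, add_tsub_cancel_left]
  refine ⟨hd ▸ le_self_add, ?_⟩
  rw [top, top, seg_mul_mul, h, hsig, seg_mul_mul]
  exact fun e => hne (Subtype.ext e)

end Loop

section TwoGraph

variable {Λ : KGraph 2}

namespace Loop

variable {u : Λ.Vertex}

theorem d_pow_mul_pow {a b : Λ.Loop u} (ha : Λ.d a.1 = Pi.single 0 1)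
    (hb : Λ.d b.1 = Pi.single 1 1) (m : Fin 2 → ℕ) : Λ.d (a ^ m 0 * b ^ m 1).1 = m := by
  ext t; fin_cases t <;> simp [d_mul, d_pow, ha, hb]

theorem exists_distinguishes_of_fst_lt {a₁ a₂ b : Λ.Loop u} (ha₁ : Λ.d a₁.1 = Pi.single 0 1)
    (ha₂ : Λ.d a₂.1 = Pi.single 0 1) (hb : Λ.d b.1 = Pi.single 1 1) (hne : a₁ ≠ a₂)
    (h₁ : Commute b a₁) (h₂ : Commute b a₂) {m n : Fin 2 → ℕ} (hmn : m 0 < n 0) :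
    ∃ x : Λ.Loop u, Λ.Distinguishes x.1 m n := by
  obtain ⟨c, hc⟩ : ∃ c, c = max (m 1) (n 1) := ⟨_, rfl⟩
  obtain ⟨j, hj⟩ : ∃ j, n 0 = m 0 + (j + 1) := ⟨n 0 - m 0 - 1, by omega⟩
  have key : a₁ ^ m 0 * b ^ m 1 * a₁ * (a₁ ^ j * a₂ * b ^ (c - m 1)) =
      a₁ ^ n 0 * b ^ n 1 * a₂ * b ^ (c - n 1) := by
    calc _ = a₁ ^ m 0 * (b ^ m 1 * (a₁ ^ (j + 1) * a₂) * b ^ (c - m 1)) := by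
          simp only [mul_assoc, pow_succ']
      _ = a₁ ^ m 0 * (a₁ ^ (j + 1) * a₂ * b ^ c) := by
          rw [((h₁.pow_right _).mul_right h₂).pow_mul_mul_pow,
            Nat.add_sub_cancel' (hc ▸ le_max_left _ _)]
      _ = a₁ ^ n 0 * (a₂ * b ^ c) := by simp only [hj, pow_add, mul_assoc]
      _ = a₁ ^ n 0 * (b ^ n 1 * a₂ * b ^ (c - n 1)) := by
          rw [h₂.pow_mul_mul_pow, Nat.add_sub_cancel' (hc ▸ le_max_right _ _)]
      _ = _ := by simp only [mul_assoc]
  have hd := distinguishes_of_mul_mul_eq key (ha₁.trans ha₂.symm) hne (by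
    rw [d_pow_mul_pow ha₁ hb, d_pow_mul_pow ha₁ hb]
    ext t; fin_cases t <;> simp [d_mul, d_pow, ha₁, ha₂, hb] <;> omega)
  rw [d_pow_mul_pow ha₁ hb, d_pow_mul_pow ha₁ hb] at hd
  exact ⟨_, hd⟩

theorem exists_distinguishes_of_fst_eq_of_snd_lt {a b₁ b₂ : Λ.Loop u}
    (ha : Λ.d a.1 = Pi.single 0 1) (hb₁ : Λ.d b₁.1 = Pi.single 1 1)
    (hb₂ : Λ.d b₂.1 = Pi.single 1 1) (hne : b₂ ≠ b₁) {m n : Fin 2 → ℕ} (h₀ : m 0 = n 0)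
    (h₁ : m 1 < n 1) : ∃ x : Λ.Loop u, Λ.Distinguishes x.1 m n := by
  obtain ⟨j, hj⟩ : ∃ j, n 1 = m 1 + (j + 1) := ⟨n 1 - m 1 - 1, by omega⟩
  have key : a ^ m 0 * b₂ ^ m 1 * b₂ * (b₂ ^ j * b₁) = a ^ n 0 * b₂ ^ n 1 * b₁ * 1 := by
    simp only [h₀, hj, pow_add, pow_succ', mul_assoc, mul_one]
  have hd := distinguishes_of_mul_mul_eq key (hb₂.trans hb₁.symm) hne (by
    rw [d_pow_mul_pow ha hb₂, d_pow_mul_pow ha hb₂]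
    ext t; fin_cases t <;> simp [d_mul, d_pow, ha, hb₁, hb₂] <;> omega)
  rw [d_pow_mul_pow ha hb₂, d_pow_mul_pow ha hb₂] at hd
  exact ⟨_, hd⟩

theorem exists_distinguishes {a₁ a₂ b₁ b₂ : Λ.Loop u} (ha₁ : Λ.d a₁.1 = Pi.single 0 1)
    (ha₂ : Λ.d a₂.1 = Pi.single 0 1) (hb₁ : Λ.d b₁.1 = Pi.single 1 1)
    (hb₂ : Λ.d b₂.1 = Pi.single 1 1) (hα : a₁ ≠ a₂) (hβ : b₁ ≠ b₂) (h₁ : Commute b₂ a₁)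
    (h₂ : Commute b₂ a₂) {m n : Fin 2 → ℕ} (hmn : m ≠ n) :
    ∃ x : Λ.Loop u, Λ.Distinguishes x.1 m n := by
  rcases lt_trichotomy (m 0) (n 0) with h₀ | h₀ | h₀
  · exact exists_distinguishes_of_fst_lt ha₁ ha₂ hb₂ hα h₁ h₂ h₀
  · rcases lt_trichotomy (m 1) (n 1) with h₁ | h₁ | h₁
    · exact exists_distinguishes_of_fst_eq_of_snd_lt ha₁ hb₁ hb₂ hβ.symm h₀ h₁
    · exact absurd (funext (Fin.forall_fin_two.2 ⟨h₀, h₁⟩)) hmn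
    · obtain ⟨x, hx⟩ := exists_distinguishes_of_fst_eq_of_snd_lt ha₁ hb₁ hb₂ hβ.symm h₀.symm h₁
      exact ⟨x, hx.symm⟩
  · obtain ⟨x, hx⟩ := exists_distinguishes_of_fst_lt ha₁ ha₂ hb₂ hα h₁ h₂ h₀
    exact ⟨x, hx.symm⟩

end Loop

theorem AperiodicQuartet.exists_distinguishes {v al1 al2 be1 be2 : Λ.Path} (hv : Λ.IsVertex v)
    (hq : Λ.AperiodicQuartet v 1 1 al1 al2 be1 be2) {m n : Fin 2 → ℕ} (hmn : m ≠ n) :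
    ∃ lam, Λ.r lam = v ∧ Λ.s lam = v ∧ Λ.Distinguishes lam m n := by
  obtain ⟨-, -, hα, hβ, ra₁, sa₁, da₁, ra₂, sa₂, da₂, rb₁, sb₁, db₁, rb₂, sb₂, db₂, h₁, h₂, -, -⟩ :=
    hq
  obtain ⟨x, hx⟩ := Loop.exists_distinguishes (u := ⟨v, hv⟩) (a₁ := ⟨al1, ra₁, sa₁⟩)
    (a₂ := ⟨al2, ra₂, sa₂⟩) (b₁ := ⟨be1, rb₁, sb₁⟩) (b₂ := ⟨be2, rb₂, sb₂⟩) da₁ da₂ db₁ db₂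
    (fun e => hα (congrArg Subtype.val e)) (fun e => hβ (congrArg Subtype.val e))
    (Subtype.ext h₁) (Subtype.ext h₂) hmn
  exact ⟨x.1, x.2.1, x.2.2, hx⟩

end TwoGraph

end KGraph

theorem stmt6_general (Λ : KGraph 2)
    (h : ∀ v, Λ.IsVertex v → ∃ al1 al2 be1 be2,
      KGraph.AperiodicQuartet Λ v 1 1 al1 al2 be1 be2) :
    Λ.StronglyAperiodic := by
  intro H _ _ _ _ v hv hvH m n hmn
  obtain ⟨al1, al2, be1, be2, hq⟩ := h v hv
  obtain ⟨lam, hr, hs, hd⟩ := hq.exists_distinguishes hv hmn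
  exact ⟨lam, hr, hs ▸ hvH, hd⟩

/-- If every vertex has a `(1,1)`-aperiodic quartet, then `Λ` is strongly
aperiodic. -/
theorem stmt6 (Λ : KGraph 2) (hrf : Λ.RowFinite) (hns : Λ.NoSources)
    (h : ∀ v, Λ.IsVertex v → ∃ al1 al2 be1 be2,
      KGraph.AperiodicQuartet Λ v 1 1 al1 al2 be1 be2) :
    Λ.StronglyAperiodic :=
  stmt6_general Λ h
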